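/- For all integers w, I, and α with α ≥ 0, w + α ≥ 0, and I ≥ 1, one has Q(w, 0, I, α) = 0. -/

import Mathlib

/-- The generalized binomial coefficient `C(a,b)` for integers `a`, `b`:
`C(a,b) = 0` if `b < 0`, and `C(a,b) = a(a-1)⋯(a-b+1)/b!` if `b ≥ 0`. -/
noncomputable def binom (a b : ℤ) : ℤ := if b < 0 then 0 else Ring.choose a b.toNat

/-- The integer `Q(w,t,I,α)` from Definition 3.1 of the paper (intended for `0 ≤ α`). -/
noncomputable def Q (w t I α : ℤ) : ℤ :=
  if α = 0 then
    -(∑ᶠ i : ℤ, binom (I - 1) (w - i) * binom (i + I - w - 2) i * binom t (I - i))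
    + (∑ᶠ i ∈ Set.Iic w,
        ((i + w + 1).negOnePow : ℤ) * binom (2 * i - w - 2 + t) (2 * i - w - 1) * binom t (I - i))
    + (∑ᶠ i ∈ Set.Iic w,
        ((i + w).negOnePow : ℤ) * binom (t + i - 1) i * binom t (I - i))
  else
    -(∑ᶠ i : ℤ, binom (I - 1) (w - i) * binom (i + I - w - 2) i * binom t (I - i - α))
    + (∑ᶠ i ∈ Set.Iic w,
        ((i + w + 1 + α).negOnePow : ℤ) * binom (2 * i - w - 2 + t + α) (2 * i - w - 1 + α) *
          binom t (I - i - α))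
    + (∑ i ∈ Finset.Icc (1 : ℤ) (α - 1),
        ((i + 1).negOnePow : ℤ) * binom (I - 1) (w + i) * binom (t + w + i) (I - α + i))

/-! With `t = 0` the factor `C(0, x)` is the indicator of `x = 0`, so both series defining `Q`
collapse to a single term. For `α ≥ 1` the trinomial identity `C(n,j) C(j,j-k) = C(n,k) C(n-k,j-k)`
with `k = K := w + α - I` turns the finite sum into `C(I-1,K)` times an alternating partial sum of
binomials, which telescopes by Pascal's rule and cancels the first term. In every case what is
left vanishes unless `K = I - 1`, where the two surviving terms are `±1` with opposite signs. -/

open Finset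

lemma binom_of_neg {a b : ℤ} (h : b < 0) : binom a b = 0 := if_pos h

lemma binom_of_nonneg {a b : ℤ} (h : 0 ≤ b) : binom a b = Ring.choose a b.toNat :=
  if_neg h.not_gt

lemma binom_zero_right (a : ℤ) : binom a 0 = 1 := by
  simp [binom_of_nonneg le_rfl]

lemma binom_eq_choose {n k : ℤ} (hn : 0 ≤ n) (hk : 0 ≤ k) :
    binom n k = n.toNat.choose k.toNat := by
  lift n to ℕ using hn
  simp [binom_of_nonneg hk, Ring.choose_natCast]

lemma binom_eq_zero_of_lt {n k : ℤ} (hn : 0 ≤ n) (h : n < k) : binom n k = 0 := by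
  rw [binom_eq_choose hn (by omega), Nat.choose_eq_zero_of_lt (by omega), Nat.cast_zero]

lemma binom_self {n : ℤ} (hn : 0 ≤ n) : binom n n = 1 := by
  simp [binom_eq_choose hn hn]

lemma binom_zero_left (b : ℤ) : binom 0 b = if b = 0 then 1 else 0 := by
  rcases lt_trichotomy b 0 with h | rfl | h
  · rw [binom_of_neg h, if_neg h.ne]
  · rw [binom_zero_right, if_pos rfl]
  · rw [binom_eq_zero_of_lt le_rfl h, if_neg h.ne']

lemma binom_neg_one_left {m : ℤ} (hm : 0 ≤ m) : binom (-1) m = m.negOnePow := by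
  lift m to ℕ using hm
  simp [binom_of_nonneg, Ring.choose_neg, Ring.choose_natCast, Units.smul_def]

lemma binom_symm {n : ℤ} (hn : 0 ≤ n) (k : ℤ) : binom n (n - k) = binom n k := by
  rcases lt_or_ge k 0 with hk | hk
  · rw [binom_of_neg hk, binom_eq_zero_of_lt hn (by omega)]
  rcases lt_or_ge n k with hnk | hkn
  · rw [binom_of_neg (by omega), binom_eq_zero_of_lt hn hnk]
  rw [binom_eq_choose hn (by omega), binom_eq_choose hn hk, ← Nat.choose_symm (by omega)]
  congr 2
  omega

lemma binom_mul_binom (n j k : ℤ) :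
    binom n j * binom j k = binom n k * binom (n - k) (j - k) := by
  rcases lt_or_ge k 0 with hk | hk
  · rw [binom_of_neg hk, binom_of_neg hk, mul_zero, zero_mul]
  rcases lt_or_ge j k with hjk | hkj
  · rw [binom_of_neg (show j - k < 0 by omega), mul_zero]
    rcases lt_or_ge j 0 with hj | hj
    · rw [binom_of_neg hj, zero_mul]
    · rw [binom_eq_zero_of_lt hj hjk, mul_zero]
  lift j to ℕ using by omega
  lift k to ℕ using hk
  have hkj : k ≤ j := by exact_mod_cast hkj
  have h := Ring.choose_smul_choose n hkj
  rw [nsmul_eq_mul] at h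
  rw [← Nat.cast_sub hkj]
  simp only [binom_of_nonneg (Nat.cast_nonneg _), Int.toNat_natCast, Ring.choose_natCast]
  rw [← h, mul_comm]

lemma binom_mul_binom_sub (n j k : ℤ) :
    binom n j * binom j (j - k) = binom n k * binom (n - k) (j - k) := by
  rcases lt_or_ge j 0 with hj | hj
  · rw [binom_of_neg hj, zero_mul]
    rcases lt_or_ge k 0 with hk | hk
    · rw [binom_of_neg hk, zero_mul]
    · rw [binom_of_neg (show j - k < 0 by omega), mul_zero]
  · rw [binom_symm hj, binom_mul_binom]

lemma binom_succ_succ (n k : ℤ) : binom (n + 1) (k + 1) = binom n k + binom n (k + 1) := by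
  rcases lt_trichotomy k (-1) with hk | rfl | hk
  · simp [binom_of_neg (show k < 0 by omega), binom_of_neg (show k + 1 < 0 by omega)]
  · simp [binom_zero_right, binom_of_neg]
  · rw [binom_of_nonneg (by omega), binom_of_nonneg (by omega), binom_of_nonneg (by omega),
      show (k + 1).toNat = k.toNat + 1 by omega, Ring.choose_succ_succ]

lemma binom_self_add_one (a : ℤ) : binom a (a + 1) = if a = -1 then 1 else 0 := by
  rcases lt_trichotomy a (-1) with ha | rfl | ha
  · rw [binom_of_neg (by omega), if_neg ha.ne]
  · simp [binom_zero_right]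
  · rw [binom_eq_zero_of_lt (by omega) (by omega), if_neg ha.ne']

lemma binom_mul_binom_sub_one_sub {n m : ℤ} (hn : 0 ≤ n) (hm : n ≤ m) (k : ℤ) :
    binom n k * binom (n - 1 - k) m = if k = n then (m.negOnePow : ℤ) else 0 := by
  rcases lt_or_ge k 0 with hk | hk
  · rw [binom_of_neg hk, zero_mul, if_neg (by omega)]
  rcases lt_trichotomy k n with hkn | rfl | hkn
  · rw [binom_eq_zero_of_lt (n := n - 1 - k) (by omega) (by omega), mul_zero, if_neg hkn.ne]
  · rw [binom_self hn, sub_sub_cancel_left, binom_neg_one_left (by omega), one_mul, if_pos rfl]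
  · rw [binom_eq_zero_of_lt hn hkn, zero_mul, if_neg hkn.ne']

lemma sum_Icc_sub_sub_one {M : Type*} [AddCommGroup M] (f : ℤ → M) {a b : ℤ} (hab : a ≤ b + 1) :
    ∑ i ∈ Icc a b, (f i - f (i - 1)) = f b - f (a - 1) := by
  induction b, (show a - 1 ≤ b by omega) using Int.leInduction with
  | base => simp
  | succ b hab ih =>
    rw [← insert_Icc_right_eq_Icc_add_one (by omega), sum_insert (by simp), ih (by omega),
      add_sub_cancel_right]
    abel

lemma sum_Icc_negOnePow_mul_binom (N c : ℤ) {a b : ℤ} (hab : a ≤ b + 1) :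
    ∑ i ∈ Icc a b, (i.negOnePow : ℤ) * binom N (i + c)
      = b.negOnePow * binom (N - 1) (b + c) - (a - 1).negOnePow * binom (N - 1) (a - 1 + c) := by
  rw [← sum_Icc_sub_sub_one (fun i ↦ (i.negOnePow : ℤ) * binom (N - 1) (i + c)) hab]
  refine sum_congr rfl fun i _ ↦ ?_
  have pascal := binom_succ_succ (N - 1) (i - 1 + c)
  rw [sub_add_cancel, show i - 1 + c + 1 = i + c by ring] at pascal
  rw [pascal, Int.negOnePow_sub, Int.negOnePow_one]
  push_cast
  ring

lemma finsum_mul_binom_zero_left (f : ℤ → ℤ) (a : ℤ) : ∑ᶠ i, f i * binom 0 (a - i) = f a := by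
  rw [finsum_eq_single _ a fun i hi ↦ by
    rw [binom_zero_left, if_neg (sub_ne_zero.2 hi.symm), mul_zero]]
  rw [sub_self, binom_zero_right, mul_one]

lemma finsum_mem_Iic_mul_binom_zero_left (f : ℤ → ℤ) (a w : ℤ) :
    ∑ᶠ i ∈ Set.Iic w, f i * binom 0 (a - i) = if a ≤ w then f a else 0 := by
  simp_rw [finsum_mem_def, Set.indicator_mul_left]
  rw [finsum_mul_binom_zero_left]
  simp [Set.indicator_apply]

lemma sum_Icc_negOnePow_mul_binom_mul_binom (w I : ℤ) {α : ℤ} (hα : 1 ≤ α) :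
    ∑ i ∈ Icc 1 (α - 1),
        ((i + 1).negOnePow : ℤ) * binom (I - 1) (w + i) * binom (w + i) (I - α + i)
      = binom (I - 1) (w + α - I) *
          (α.negOnePow * binom (2 * I - w - α - 2) (I - 1)
            + binom (2 * I - w - α - 2) (I - α)) := by
  have term : ∀ i, ((i + 1).negOnePow : ℤ) * binom (I - 1) (w + i) * binom (w + i) (I - α + i)
      = -(binom (I - 1) (w + α - I) * (i.negOnePow * binom (2 * I - w - α - 1) (i + (I - α)))) := by
    intro i
    have trinomial := binom_mul_binom_sub (I - 1) (w + i) (w + α - I)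
    rw [show w + i - (w + α - I) = I - α + i by ring,
      show I - 1 - (w + α - I) = 2 * I - w - α - 1 by ring] at trinomial
    rw [mul_assoc, trinomial, Int.negOnePow_succ, add_comm (I - α)]
    push_cast
    ring
  rw [sum_congr rfl fun i _ ↦ term i, sum_neg_distrib, ← mul_sum,
    sum_Icc_negOnePow_mul_binom _ _ (by omega),
    show 2 * I - w - α - 1 - 1 = 2 * I - w - α - 2 by ring, show α - 1 + (I - α) = I - 1 by ring,
    sub_self, zero_add, Int.negOnePow_zero, Int.negOnePow_sub, Int.negOnePow_one]
  push_cast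
  ring

lemma Q_zero_zero_eq {I : ℤ} (hI : 1 ≤ I) (w : ℤ) :
    Q w 0 I 0 = -(binom (I - 1) (w - I) * binom (2 * I - w - 2) I)
      + if I ≤ w then
          ((I + w + 1).negOnePow : ℤ) * binom (2 * I - w - 2) (2 * I - w - 1) else 0 := by
  rw [Q, if_pos rfl, finsum_mul_binom_zero_left, finsum_mem_Iic_mul_binom_zero_left,
    finsum_mem_Iic_mul_binom_zero_left, binom_eq_zero_of_lt (n := 0 + I - 1) (by omega) (by omega),
    mul_zero, ite_self, add_zero, add_zero, ← two_mul]

lemma Q_zero_eq_of_pos {α : ℤ} (hα : 0 < α) (w I : ℤ) :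
    Q w 0 I α = (if I - α ≤ w then
        ((I + w + 1).negOnePow : ℤ) * binom (2 * I - w - α - 2) (2 * I - w - α - 1) else 0)
      + α.negOnePow * binom (I - 1) (w + α - I) * binom (2 * I - w - α - 2) (I - 1) := by
  rw [Q, if_neg hα.ne']
  simp only [sub_right_comm I _ α, zero_add, add_zero]
  rw [finsum_mul_binom_zero_left, finsum_mem_Iic_mul_binom_zero_left,
    sum_Icc_negOnePow_mul_binom_mul_binom _ _ hα, show w - (I - α) = w + α - I by ring,
    show I - α + I - w - 2 = 2 * I - w - α - 2 by ring,
    show I - α + w + 1 + α = I + w + 1 by ring,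
    show 2 * (I - α) - w - 2 + α = 2 * I - w - α - 2 by ring,
    show 2 * (I - α) - w - 1 + α = 2 * I - w - α - 1 by ring]
  ring

lemma Q_zero_zero_eq_zero (w : ℤ) {I : ℤ} (hI : 1 ≤ I) : Q w 0 I 0 = 0 := by
  rw [Q_zero_zero_eq hI, show 2 * I - w - 1 = I - 1 - 1 - (w - I) + 1 by ring,
    show 2 * I - w - 2 = I - 1 - 1 - (w - I) by ring,
    binom_mul_binom_sub_one_sub (by omega) (by omega), binom_self_add_one]
  by_cases hw : w - I = I - 1
  · have sign : (I + w + 1).negOnePow = I.negOnePow :=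
      (Int.negOnePow_eq_iff _ _).2 ⟨I, by omega⟩
    rw [if_pos hw, if_pos (show I ≤ w by omega), if_pos (show I - 1 - 1 - (w - I) = -1 by omega),
      sign]
    ring
  · rw [if_neg hw, if_neg (show I - 1 - 1 - (w - I) ≠ -1 by omega)]
    simp

lemma Q_zero_eq_zero_of_pos (w : ℤ) {I α : ℤ} (hα : 0 < α) (hI : 1 ≤ I) : Q w 0 I α = 0 := by
  rw [Q_zero_eq_of_pos hα, show 2 * I - w - α - 1 = I - 1 - 1 - (w + α - I) + 1 by ring,
    show 2 * I - w - α - 2 = I - 1 - 1 - (w + α - I) by ring, mul_assoc,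
    binom_mul_binom_sub_one_sub (by omega) le_rfl, binom_self_add_one]
  by_cases hw : w + α - I = I - 1
  · have sign : (I + w + 1).negOnePow = (α + (I - 1) + 1).negOnePow :=
      (Int.negOnePow_eq_iff _ _).2 ⟨I - α, by omega⟩
    rw [if_pos hw, if_pos (show I - α ≤ w by omega),
      if_pos (show I - 1 - 1 - (w + α - I) = -1 by omega), sign, Int.negOnePow_succ,
      Int.negOnePow_add]
    push_cast
    ring
  · rw [if_neg hw, if_neg (show I - 1 - 1 - (w + α - I) ≠ -1 by omega)]
    simp

theorem Q_zero_t_general (w I α : ℤ) (hα : 0 ≤ α) (hI : 1 ≤ I) :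
    Q w 0 I α = 0 := by
  rcases hα.eq_or_lt with rfl | hα
  · exact Q_zero_zero_eq_zero w hI
  · exact Q_zero_eq_zero_of_pos w hα hI

theorem Q_zero_t (w I α : ℤ) (hα : 0 ≤ α) (hwα : 0 ≤ w + α) (hI : 1 ≤ I) :
    Q w 0 I α = 0 :=
  Q_zero_t_general w I α hα hI
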